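/- (Contraction estimate (4.18) for the fixed-point operator.) Let L_μ = max_{0≤s≤S_in} |μ'(s)|. Then for every δ ∈ (0,1] and all (y₁,z₁), (y₂,z₂) ∈ B_R: ‖T₁(y₁,z₁) − T₁(y₂,z₂)‖_∞ + ‖T₂(y₁,z₁) − T₂(y₂,z₂)‖_∞ ≤ M(‖k̃‖_∞ + M‖q̃‖_∞ δ)·δ·‖y₁ − y₂‖_∞ + L_μ(‖h̄‖_∞ + (M‖q̃‖_∞ δ + ‖k̃‖_∞)(R + ‖ḡ‖_∞))·δ·‖z₁ − z₂‖_∞. -/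

import Mathlib

open MeasureTheory Set Filter

noncomputable section

/-- Admissible inputs: `D ∈ L^∞_loc([0,∞); [0,∞))` (represented by a measurable,
non-negative function bounded on every compact interval `[0,T]`). -/
def AdmissibleInput (D : ℝ → ℝ) : Prop :=
  Measurable D ∧ (∀ t, 0 ≤ t → 0 ≤ D t) ∧
  ∀ T, 0 < T → ∃ C, ∀ t ∈ Icc (0:ℝ) T, D t ≤ C

/-- Standing assumptions on the model data `μ, β, k, q : [0,∞) → [0,∞)` and `S_in > 0`. -/
def ModelHyp (μ β k q : ℝ → ℝ) (S_in : ℝ) : Prop :=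
  ContinuousOn μ (Ici 0) ∧ (∀ s, 0 ≤ s → 0 ≤ μ s) ∧ (∃ C, ∀ s, 0 ≤ s → μ s ≤ C) ∧
  ContDiffOn ℝ 1 μ (Ici 0) ∧ μ 0 = 0 ∧ (∀ s, 0 < s → 0 < μ s) ∧
  ContinuousOn β (Ici 0) ∧ (∀ a, 0 ≤ a → 0 ≤ β a) ∧ (∃ C, ∀ a, 0 ≤ a → β a ≤ C) ∧
  ContinuousOn k (Ici 0) ∧ (∀ a, 0 ≤ a → 0 ≤ k a) ∧ (∃ C, ∀ a, 0 ≤ a → k a ≤ C) ∧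
  ContinuousOn q (Ici 0) ∧ (∀ a, 0 ≤ a → 0 ≤ q a) ∧ (∃ C, ∀ a, 0 ≤ a → q a ≤ C) ∧
  (0 < ∫⁻ a in Ioi (0:ℝ), ENNReal.ofReal (k a)) ∧
  (0 < ∫⁻ a in Ioi (0:ℝ), ENNReal.ofReal (q a)) ∧
  0 < S_in

/-- `ḡ` (resp. `h̄`) of (4.5): `t ↦ ∫_t^∞ w(a) f₀(a−t) exp(−∫_{a−t}^a β) da`
for `w = k` (resp. `w = q`). -/
def kernelInt (w β f₀ : ℝ → ℝ) (t : ℝ) : ℝ :=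
  ∫ a in Ioi t, w a * f₀ (a - t) * Real.exp (-(∫ s in (a - t)..a, β s))

/-- `b` of (4.5): `b(t) = exp(−∫₀^t D(s) ds)`. -/
def bInput (D : ℝ → ℝ) (t : ℝ) : ℝ := Real.exp (-(∫ s in (0:ℝ)..t, D s))

/-- `k̃` (resp. `q̃`) of (4.6): `a ↦ w(a)·exp(−∫₀^a β(s) ds)`. -/
def discounted (w β : ℝ → ℝ) (a : ℝ) : ℝ :=
  w a * Real.exp (-(∫ s in (0:ℝ)..a, β s))

/-- The first component (4.9) of the fixed-point operator. -/
def T1op (μ k β f₀ : ℝ → ℝ) (S₀ : ℝ) (y z : ℝ → ℝ) (t : ℝ) : ℝ :=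
  ∫ a in (0:ℝ)..t,
    discounted k β a * μ (z (t - a) + S₀) * (y (t - a) + kernelInt k β f₀ (t - a))

/-- The second component (4.10) of the fixed-point operator. -/
def T2op (μ k q β f₀ D : ℝ → ℝ) (S_in S₀ : ℝ) (y z : ℝ → ℝ) (t : ℝ) : ℝ :=
  (S_in - S₀) * (1 - bInput D t)
    - bInput D t * (∫ τ in (0:ℝ)..t, μ (z τ + S₀) * kernelInt q β f₀ τ)
    - bInput D t * ∫ τ in (0:ℝ)..t, μ (z τ + S₀) *
        ∫ a in (0:ℝ)..τ,
          discounted q β a * μ (z (τ - a) + S₀) * (y (τ - a) + kernelInt k β f₀ (τ - a))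

/-- Membership in the closed ball `B_R ⊆ H = C⁰([0,δ];ℝ²)`, where the `H`-norm is
`‖(y,z)‖_H = max_{[0,δ]}|y| + max_{[0,δ]}|z|` (the bound `‖(y,z)‖_H ≤ R` is expressed
pairwise: `|y t₁| + |z t₂| ≤ R` for all `t₁, t₂ ∈ [0,δ]`). -/
def MemBR (δ R : ℝ) (y z : ℝ → ℝ) : Prop :=
  ContinuousOn y (Icc 0 δ) ∧ ContinuousOn z (Icc 0 δ) ∧
  ∀ t₁ ∈ Icc 0 δ, ∀ t₂ ∈ Icc 0 δ, |y t₁| + |z t₂| ≤ R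

lemma kernelInt_shift (w β f₀ : ℝ → ℝ) (t : ℝ) :
    kernelInt w β f₀ t
      = ∫ u in Ioi (0:ℝ), w (u + t) * f₀ u * Real.exp (-(∫ s in u..(u + t), β s)) := by
  unfold kernelInt
  have h := MeasureTheory.integral_add_right_eq_self (μ := volume)
    (fun a => (Ioi t).indicator
      (fun a => w a * f₀ (a - t) * Real.exp (-(∫ s in (a-t)..a, β s))) a) t
  rw [← integral_indicator measurableSet_Ioi, ← h, ← integral_indicator measurableSet_Ioi]
  congr 1
  funext u
  simp only [indicator_apply, mem_Ioi, lt_add_iff_pos_left, add_sub_cancel_right]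

lemma discounted_continuousOn (w β : ℝ → ℝ) (hw : ContinuousOn w (Ici 0))
    (hβ : ContinuousOn β (Ici 0)) : ContinuousOn (discounted w β) (Ici 0) := by
  set β' : ℝ → ℝ := fun x => β (max x 0) with hβ'def
  have hβ'c : Continuous β' :=
    hβ.comp_continuous (continuous_id.max continuous_const) (fun x => Set.mem_Ici.mpr (le_max_right _ _))
  have hQc : Continuous fun x => ∫ s in (0:ℝ)..x, β' s :=
    intervalIntegral.continuous_primitive (fun a b => hβ'c.intervalIntegrable a b) 0
  have hcont : ContinuousOn (fun a => w a * Real.exp (-(∫ s in (0:ℝ)..a, β' s))) (Ici 0) :=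
    hw.mul (Real.continuous_exp.comp hQc.neg).continuousOn
  apply hcont.congr
  intro a ha
  unfold discounted
  have e : (∫ s in (0:ℝ)..a, β s) = ∫ s in (0:ℝ)..a, β' s := by
    apply intervalIntegral.integral_congr
    intro s hs
    rw [uIcc_of_le ha] at hs
    simp [hβ'def, max_eq_left hs.1]
  rw [e]

lemma kernelInt_continuousOn (w β f₀ : ℝ → ℝ) (Cw Cβ : ℝ)
    (hw : ContinuousOn w (Ici 0)) (hw0 : ∀ a, 0 ≤ a → 0 ≤ w a) (hwb : ∀ a, 0 ≤ a → w a ≤ Cw)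
    (hβ : ContinuousOn β (Ici 0)) (hβ0 : ∀ a, 0 ≤ a → 0 ≤ β a) (hβb : ∀ a, 0 ≤ a → β a ≤ Cβ)
    (hf₀c : ContinuousOn f₀ (Ici 0)) (hf₀p : ∀ a, 0 ≤ a → 0 < f₀ a)
    (hf₀i : IntegrableOn f₀ (Ioi 0)) :
    ContinuousOn (kernelInt w β f₀) (Ici 0) := by
  have hc0c : Continuous (fun x : ℝ => max x 0) := continuous_id.max continuous_const
  have hc0m : ∀ x : ℝ, max x 0 ∈ Ici (0:ℝ) := fun x => Set.mem_Ici.mpr (le_max_right _ _)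
  set w' : ℝ → ℝ := fun x => w (max x 0) with hw'def
  set β' : ℝ → ℝ := fun x => β (max x 0) with hβ'def
  set f' : ℝ → ℝ := fun x => f₀ (max x 0) with hf'def
  have hw'c : Continuous w' := hw.comp_continuous hc0c hc0m
  have hβ'c : Continuous β' := hβ.comp_continuous hc0c hc0m
  have hf'c : Continuous f' := hf₀c.comp_continuous hc0c hc0m
  set Q : ℝ → ℝ := fun x => ∫ s in (0:ℝ)..x, β' s with hQdef
  have hQc : Continuous Q :=
    intervalIntegral.continuous_primitive (fun a b => hβ'c.intervalIntegrable a b) 0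
  set F : ℝ → ℝ → ℝ := fun t u => w' (u + t) * f' u * Real.exp (Q u - Q (u + t)) with hFdef
  have key : ∀ t ∈ Ici (0:ℝ), kernelInt w β f₀ t = ∫ u in Ioi (0:ℝ), F t u := by
    intro t ht
    have ht' : (0:ℝ) ≤ t := ht
    rw [kernelInt_shift]
    refine setIntegral_congr_fun measurableSet_Ioi (fun u hu => ?_)
    have hu0 : (0:ℝ) ≤ u := le_of_lt hu
    have h3 : (∫ s in u..(u+t), β s) = Q (u + t) - Q u := by
      have e1 : (∫ s in u..(u+t), β s) = ∫ s in u..(u+t), β' s := by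
        apply intervalIntegral.integral_congr
        intro s hs
        rw [uIcc_of_le (by linarith : u ≤ u + t)] at hs
        simp [hβ'def, max_eq_left (le_trans hu0 hs.1)]
      rw [e1, ← intervalIntegral.integral_interval_sub_left
          (hβ'c.intervalIntegrable 0 (u+t)) (hβ'c.intervalIntegrable 0 u)]
    simp only [hFdef, hw'def, hf'def, h3, neg_sub, max_eq_left (add_nonneg hu0 ht'),
      max_eq_left hu0]
  have cont : Continuous fun t => ∫ u in Ioi (0:ℝ), F t u := by
    rw [continuous_iff_continuousAt]
    intro t₀
    set Cβ' : ℝ := max Cβ 0 with hCβ'def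
    have hCβ'0 : 0 ≤ Cβ' := le_max_right _ _
    have hβ'b : ∀ x, ‖β' x‖ ≤ Cβ' := by
      intro x
      rw [Real.norm_eq_abs, abs_of_nonneg (hβ0 _ (hc0m x))]
      exact le_max_of_le_left (hβb _ (hc0m x))
    have hQL : ∀ u v : ℝ, |Q v - Q u| ≤ Cβ' * |v - u| := by
      intro u v
      have h := intervalIntegral.norm_integral_le_of_norm_le_const
        (a := u) (b := v) (C := Cβ') (f := β') (fun x _ => hβ'b x)
      rw [← intervalIntegral.integral_interval_sub_left
          (hβ'c.intervalIntegrable 0 v) (hβ'c.intervalIntegrable 0 u)] at h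
      simpa using h
    set W : ℝ := max Cw 0 with hWdef
    have hw'b : ∀ x, |w' x| ≤ W := by
      intro x
      rw [abs_of_nonneg (hw0 _ (hc0m x))]
      exact le_max_of_le_left (hwb _ (hc0m x))
    set E : ℝ := Real.exp (Cβ' * (|t₀| + 1)) with hEdef
    have hf'pos : ∀ u, 0 < f' u := fun u => hf₀p _ (hc0m u)
    apply continuousAt_of_dominated (bound := fun u => W * E * f' u)
    · refine Eventually.of_forall fun t => ?_
      exact (((hw'c.comp (continuous_id.add continuous_const)).mul hf'c).mul
        (Real.continuous_exp.comp
          (hQc.sub (hQc.comp (continuous_id.add continuous_const))))).aestronglyMeasurable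
    · have hball : ∀ᶠ t in nhds t₀, dist t t₀ < 1 :=
        eventually_of_mem (Metric.ball_mem_nhds t₀ one_pos) (fun t ht => ht)
      refine hball.mono fun t ht => Eventually.of_forall fun u => ?_
      have habs : |t| ≤ |t₀| + 1 := by
        have := abs_sub_abs_le_abs_sub t t₀
        rw [Real.dist_eq] at ht
        linarith [le_of_lt ht]
      have hexp : Real.exp (Q u - Q (u + t)) ≤ E := by
        apply Real.exp_le_exp.2
        have h2 := hQL (u + t) u
        have h3 : |u - (u + t)| = |t| := by rw [abs_sub_comm]; simp
        calc Q u - Q (u + t) ≤ |Q u - Q (u + t)| := le_abs_self _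
          _ ≤ Cβ' * |t| := by rw [← h3]; exact h2
          _ ≤ Cβ' * (|t₀| + 1) := mul_le_mul_of_nonneg_left habs hCβ'0
      have h1 : ‖F t u‖ = |w' (u + t)| * f' u * Real.exp (Q u - Q (u + t)) := by
        rw [Real.norm_eq_abs, hFdef]
        rw [abs_mul, abs_mul, abs_of_pos (hf'pos u), abs_of_pos (Real.exp_pos _)]
      rw [h1]
      have hWe : |w' (u + t)| * Real.exp (Q u - Q (u + t)) ≤ W * E :=
        mul_le_mul (hw'b (u + t)) hexp (Real.exp_pos _).le
          ((abs_nonneg (w' (u + t))).trans (hw'b (u + t)))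
      calc |w' (u + t)| * f' u * Real.exp (Q u - Q (u + t))
          = (|w' (u + t)| * Real.exp (Q u - Q (u + t))) * f' u := by ring
        _ ≤ (W * E) * f' u := mul_le_mul_of_nonneg_right hWe (hf'pos u).le
    · have hfi' : IntegrableOn f' (Ioi 0) := by
        apply hf₀i.congr_fun ?_ measurableSet_Ioi
        intro x hx
        simp [hf'def, max_eq_left (le_of_lt (mem_Ioi.mp hx))]
      exact hfi'.const_mul _
    · refine Eventually.of_forall fun u => ?_
      exact (((hw'c.comp (continuous_const.add continuous_id)).mul continuous_const).mul
        (Real.continuous_exp.comp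
          (continuous_const.sub (hQc.comp (continuous_const.add continuous_id))))).continuousAt
  exact cont.continuousOn.congr key

/-- **Contraction estimate (4.18) for the fixed-point operator.** With
`R = min(S₀, S_in−S₀)/2`, `M ≥ sup μ`, `L ≥ L_μ = max_{[0,S_in]}|μ'|` and upper bounds
`Cg ≥ ‖ḡ‖_∞`, `Ch ≥ ‖h̄‖_∞`, `Ck ≥ ‖k̃‖_∞`, `Cq ≥ ‖q̃‖_∞`, for every `δ ∈ (0,1]` and
all `(y₁,z₁), (y₂,z₂) ∈ B_R`:
`‖T₁(y₁,z₁) − T₁(y₂,z₂)‖_∞ + ‖T₂(y₁,z₁) − T₂(y₂,z₂)‖_∞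
  ≤ M(Ck + M·Cq·δ)δ‖y₁−y₂‖_∞ + L(Ch + (M·Cq·δ + Ck)(R + Cg))δ‖z₁−z₂‖_∞`. -/
theorem contraction_estimate_of_fixed_point_operator
    (μ μ' β k q : ℝ → ℝ) (S_in : ℝ) (hmodel : ModelHyp μ β k q S_in)
    (hμ' : ∀ s, 0 ≤ s → HasDerivAt μ (μ' s) s) (hμ'c : ContinuousOn μ' (Ici 0))
    (f₀ : ℝ → ℝ) (hf₀c : ContinuousOn f₀ (Ici 0)) (hf₀p : ∀ a, 0 ≤ a → 0 < f₀ a)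
    (hf₀i : IntegrableOn f₀ (Ioi 0))
    (S₀ : ℝ) (hS₀ : S₀ ∈ Ioo 0 S_in)
    (D : ℝ → ℝ) (hD : AdmissibleInput D)
    (M L Cg Ch Ck Cq : ℝ)
    (hM : ∀ s, 0 ≤ s → μ s ≤ M)
    (hL : ∀ s ∈ Icc 0 S_in, |μ' s| ≤ L)
    (hCg : ∀ t ∈ Icc (0:ℝ) 1, |kernelInt k β f₀ t| ≤ Cg)
    (hCh : ∀ t ∈ Icc (0:ℝ) 1, |kernelInt q β f₀ t| ≤ Ch)
    (hCk : ∀ a, 0 ≤ a → |discounted k β a| ≤ Ck)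
    (hCq : ∀ a, 0 ≤ a → |discounted q β a| ≤ Cq)
    (δ : ℝ) (hδ0 : 0 < δ) (hδ1 : δ ≤ 1)
    (y₁ z₁ y₂ z₂ : ℝ → ℝ)
    (h1 : MemBR δ (min S₀ (S_in - S₀) / 2) y₁ z₁)
    (h2 : MemBR δ (min S₀ (S_in - S₀) / 2) y₂ z₂)
    (Ey Ez : ℝ)
    (hEy : ∀ t ∈ Icc 0 δ, |y₁ t - y₂ t| ≤ Ey)
    (hEz : ∀ t ∈ Icc 0 δ, |z₁ t - z₂ t| ≤ Ez) :
    ∀ t₁ ∈ Icc 0 δ, ∀ t₂ ∈ Icc 0 δ,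
      |T1op μ k β f₀ S₀ y₁ z₁ t₁ - T1op μ k β f₀ S₀ y₂ z₂ t₁|
        + |T2op μ k q β f₀ D S_in S₀ y₁ z₁ t₂ - T2op μ k q β f₀ D S_in S₀ y₂ z₂ t₂|
      ≤ M * (Ck + M * Cq * δ) * δ * Ey
        + L * (Ch + (M * Cq * δ + Ck) * (min S₀ (S_in - S₀) / 2 + Cg)) * δ * Ez := by
  obtain ⟨hμc, hμ0, ⟨Cμ, hμb⟩, hμdiff, hμ00, hμpos, hβc, hβ0, ⟨Cβ, hβb⟩, hkc, hk0, ⟨CK, hkb⟩,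
    hqc, hq0, ⟨CQ, hqb⟩, -, -, hSin⟩ := hmodel
  obtain ⟨hy₁c, hz₁c, hB1⟩ := h1
  obtain ⟨hy₂c, hz₂c, hB2⟩ := h2
  obtain ⟨hS₀0, hS₀in⟩ := hS₀
  set R : ℝ := min S₀ (S_in - S₀) / 2 with hRdef
  have hmin1 : min S₀ (S_in - S₀) ≤ S₀ := min_le_left _ _
  have hmin2 : min S₀ (S_in - S₀) ≤ S_in - S₀ := min_le_right _ _
  have hmin0 : 0 < min S₀ (S_in - S₀) := lt_min hS₀0 (by linarith)
  have hR0 : 0 < R := by rw [hRdef]; linarith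
  have hRS₀ : R < S₀ := by rw [hRdef]; linarith
  have hRin : S₀ + R ≤ S_in := by rw [hRdef]; linarith
  have hz₁R : ∀ s ∈ Icc (0:ℝ) δ, |z₁ s| ≤ R := fun s hs => by
    have h := hB1 s hs s hs; have := abs_nonneg (y₁ s); linarith
  have hz₂R : ∀ s ∈ Icc (0:ℝ) δ, |z₂ s| ≤ R := fun s hs => by
    have h := hB2 s hs s hs; have := abs_nonneg (y₂ s); linarith
  have hy₁R : ∀ s ∈ Icc (0:ℝ) δ, |y₁ s| ≤ R := fun s hs => by
    have h := hB1 s hs s hs; have := abs_nonneg (z₁ s); linarith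
  have hy₂R : ∀ s ∈ Icc (0:ℝ) δ, |y₂ s| ≤ R := fun s hs => by
    have h := hB2 s hs s hs; have := abs_nonneg (z₂ s); linarith
  have hM0 : 0 ≤ M := hμ00 ▸ hM 0 le_rfl
  have hL0 : 0 ≤ L := (abs_nonneg _).trans (hL 0 ⟨le_rfl, hSin.le⟩)
  have hCk0 : 0 ≤ Ck := (abs_nonneg _).trans (hCk 0 le_rfl)
  have hCq0 : 0 ≤ Cq := (abs_nonneg _).trans (hCq 0 le_rfl)
  have hCg0 : 0 ≤ Cg := (abs_nonneg _).trans (hCg 0 ⟨le_rfl, zero_le_one⟩)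
  have hCh0 : 0 ≤ Ch := (abs_nonneg _).trans (hCh 0 ⟨le_rfl, zero_le_one⟩)
  have hEy0 : 0 ≤ Ey := (abs_nonneg _).trans (hEy 0 ⟨le_rfl, hδ0.le⟩)
  have hEz0 : 0 ≤ Ez := (abs_nonneg _).trans (hEz 0 ⟨le_rfl, hδ0.le⟩)
  have hlip : ∀ u ∈ Icc (0:ℝ) S_in, ∀ v ∈ Icc (0:ℝ) S_in, |μ u - μ v| ≤ L * |u - v| := by
    intro u hu v hv
    have h := (convex_Icc (0:ℝ) S_in).norm_image_sub_le_of_norm_hasDerivWithin_le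
      (f' := μ') (fun x hx => (hμ' x hx.1).hasDerivWithinAt)
      (fun x hx => by rw [Real.norm_eq_abs]; exact hL x hx) hv hu
    simpa [Real.norm_eq_abs] using h
  -- clamping maps
  set cδ : ℝ → ℝ := fun x => max (min x δ) 0 with hcδdef
  set c1 : ℝ → ℝ := fun x => max (min x 1) 0 with hc1def
  have hcδc : Continuous cδ := (continuous_id.min continuous_const).max continuous_const
  have hc1c : Continuous c1 := (continuous_id.min continuous_const).max continuous_const
  have hcδm : ∀ x, cδ x ∈ Icc (0:ℝ) δ :=
    fun x => ⟨le_max_right _ _, max_le (min_le_right _ _) hδ0.le⟩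
  have hc1m : ∀ x, c1 x ∈ Icc (0:ℝ) 1 :=
    fun x => ⟨le_max_right _ _, max_le (min_le_right _ _) zero_le_one⟩
  have hcδid : ∀ x ∈ Icc (0:ℝ) δ, cδ x = x := fun x hx => by
    simp only [hcδdef]; rw [min_eq_left hx.2, max_eq_left hx.1]
  have hc1id : ∀ x ∈ Icc (0:ℝ) δ, c1 x = x := fun x hx => by
    simp only [hc1def]; rw [min_eq_left (hx.2.trans hδ1), max_eq_left hx.1]
  -- clamped functions
  set Φ₁ : ℝ → ℝ := fun x => μ (z₁ (cδ x) + S₀) with hΦ₁def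
  set Φ₂ : ℝ → ℝ := fun x => μ (z₂ (cδ x) + S₀) with hΦ₂def
  set gc : ℝ → ℝ := fun x => kernelInt k β f₀ (c1 x) with hgcdef
  set hcf : ℝ → ℝ := fun x => kernelInt q β f₀ (c1 x) with hhcdef
  set Ψ₁ : ℝ → ℝ := fun x => y₁ (cδ x) + gc x with hΨ₁def
  set Ψ₂ : ℝ → ℝ := fun x => y₂ (cδ x) + gc x with hΨ₂def
  set kc : ℝ → ℝ := fun a => discounted k β (max a 0) with hkcdef
  set qc : ℝ → ℝ := fun a => discounted q β (max a 0) with hqcdef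
  -- continuity
  have hgKc : ContinuousOn (kernelInt k β f₀) (Ici 0) :=
    kernelInt_continuousOn k β f₀ CK Cβ hkc hk0 hkb hβc hβ0 hβb hf₀c hf₀p hf₀i
  have hhKc : ContinuousOn (kernelInt q β f₀) (Ici 0) :=
    kernelInt_continuousOn q β f₀ CQ Cβ hqc hq0 hqb hβc hβ0 hβb hf₀c hf₀p hf₀i
  have hIcc1 : ∀ x : ℝ, c1 x ∈ Ici (0:ℝ) := fun x => (hc1m x).1
  have hgcc : Continuous gc := hgKc.comp_continuous hc1c hIcc1
  have hhcc : Continuous hcf := hhKc.comp_continuous hc1c hIcc1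
  have hmem₁ : ∀ x, z₁ (cδ x) + S₀ ∈ Icc (0:ℝ) S_in := fun x => by
    have h := hz₁R (cδ x) (hcδm x); rw [abs_le] at h
    constructor <;> [linarith [h.1]; linarith [h.2]]
  have hmem₂ : ∀ x, z₂ (cδ x) + S₀ ∈ Icc (0:ℝ) S_in := fun x => by
    have h := hz₂R (cδ x) (hcδm x); rw [abs_le] at h
    constructor <;> [linarith [h.1]; linarith [h.2]]
  have hΦ₁cont : Continuous Φ₁ :=
    hμc.comp_continuous ((hz₁c.comp_continuous hcδc hcδm).add continuous_const)
      (fun x => (hmem₁ x).1)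
  have hΦ₂cont : Continuous Φ₂ :=
    hμc.comp_continuous ((hz₂c.comp_continuous hcδc hcδm).add continuous_const)
      (fun x => (hmem₂ x).1)
  have hΨ₁cont : Continuous Ψ₁ := (hy₁c.comp_continuous hcδc hcδm).add hgcc
  have hΨ₂cont : Continuous Ψ₂ := (hy₂c.comp_continuous hcδc hcδm).add hgcc
  have hkcc : Continuous kc :=
    (discounted_continuousOn k β hkc hβc).comp_continuous
      (continuous_id.max continuous_const) (fun a => Set.mem_Ici.mpr (le_max_right _ _))
  have hqcc : Continuous qc :=
    (discounted_continuousOn q β hqc hβc).comp_continuous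
      (continuous_id.max continuous_const) (fun a => Set.mem_Ici.mpr (le_max_right _ _))
  -- bounds
  have hΦ₁M : ∀ x, |Φ₁ x| ≤ M := fun x => by
    rw [show Φ₁ x = μ (z₁ (cδ x) + S₀) from rfl, abs_of_nonneg (hμ0 _ (hmem₁ x).1)]
    exact hM _ (hmem₁ x).1
  have hΦ₂M : ∀ x, |Φ₂ x| ≤ M := fun x => by
    rw [show Φ₂ x = μ (z₂ (cδ x) + S₀) from rfl, abs_of_nonneg (hμ0 _ (hmem₂ x).1)]
    exact hM _ (hmem₂ x).1
  have hΦd : ∀ x, |Φ₁ x - Φ₂ x| ≤ L * Ez := fun x => by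
    have h1 := hlip _ (hmem₁ x) _ (hmem₂ x)
    have h2 : (z₁ (cδ x) + S₀) - (z₂ (cδ x) + S₀) = z₁ (cδ x) - z₂ (cδ x) := by ring
    rw [h2] at h1
    exact h1.trans (mul_le_mul_of_nonneg_left (hEz _ (hcδm x)) hL0)
  have hΨ₁b : ∀ x, |Ψ₁ x| ≤ R + Cg := fun x =>
    (abs_add_le _ _).trans (add_le_add (hy₁R _ (hcδm x)) (hCg _ (hc1m x)))
  have hΨ₂b : ∀ x, |Ψ₂ x| ≤ R + Cg := fun x =>
    (abs_add_le _ _).trans (add_le_add (hy₂R _ (hcδm x)) (hCg _ (hc1m x)))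
  have hΨd : ∀ x, |Ψ₁ x - Ψ₂ x| ≤ Ey := fun x => by
    have h : Ψ₁ x - Ψ₂ x = y₁ (cδ x) - y₂ (cδ x) := by
      simp only [hΨ₁def, hΨ₂def]; ring
    rw [h]; exact hEy _ (hcδm x)
  have hkcb : ∀ a, |kc a| ≤ Ck := fun a => hCk _ (le_max_right _ _)
  have hqcb : ∀ a, |qc a| ≤ Cq := fun a => hCq _ (le_max_right _ _)
  have hhcb : ∀ x, |hcf x| ≤ Ch := fun x => hCh _ (hc1m x)
  have hRCg0 : 0 ≤ R + Cg := by linarith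
  set P : ℝ := M * Ey + L * Ez * (R + Cg) with hPdef
  have hP0 : 0 ≤ P :=
    add_nonneg (mul_nonneg hM0 hEy0) (mul_nonneg (mul_nonneg hL0 hEz0) hRCg0)
  have hprod : ∀ x, |Φ₁ x * Ψ₁ x - Φ₂ x * Ψ₂ x| ≤ P := fun x => by
    have e : Φ₁ x * Ψ₁ x - Φ₂ x * Ψ₂ x
        = Φ₁ x * (Ψ₁ x - Ψ₂ x) + (Φ₁ x - Φ₂ x) * Ψ₂ x := by ring
    rw [hPdef, e]
    refine (abs_add_le _ _).trans (add_le_add ?_ ?_)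
    · rw [abs_mul]; exact mul_le_mul (hΦ₁M x) (hΨd x) (abs_nonneg _) hM0
    · rw [abs_mul]
      exact mul_le_mul (hΦd x) (hΨ₂b x) (abs_nonneg _) (mul_nonneg hL0 hEz0)
  intro t₁ ht₁ t₂ ht₂
  -- T1 part
  have hΦ₁eq : ∀ s ∈ Icc (0:ℝ) δ, μ (z₁ s + S₀) = Φ₁ s := fun s hs => by
    simp only [hΦ₁def]; rw [hcδid s hs]
  have hΦ₂eq : ∀ s ∈ Icc (0:ℝ) δ, μ (z₂ s + S₀) = Φ₂ s := fun s hs => by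
    simp only [hΦ₂def]; rw [hcδid s hs]
  have hΨ₁eq : ∀ s ∈ Icc (0:ℝ) δ, y₁ s + kernelInt k β f₀ s = Ψ₁ s := fun s hs => by
    simp only [hΨ₁def, hgcdef]; rw [hcδid s hs, hc1id s hs]
  have hΨ₂eq : ∀ s ∈ Icc (0:ℝ) δ, y₂ s + kernelInt k β f₀ s = Ψ₂ s := fun s hs => by
    simp only [hΨ₂def, hgcdef]; rw [hcδid s hs, hc1id s hs]
  have hT1e : ∀ (y z Φ Ψ : ℝ → ℝ),
      (∀ s ∈ Icc (0:ℝ) δ, μ (z s + S₀) = Φ s) →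
      (∀ s ∈ Icc (0:ℝ) δ, y s + kernelInt k β f₀ s = Ψ s) →
      T1op μ k β f₀ S₀ y z t₁ = ∫ a in (0:ℝ)..t₁, kc a * (Φ (t₁ - a) * Ψ (t₁ - a)) := by
    intro y z Φ Ψ hΦ hΨ
    unfold T1op
    apply intervalIntegral.integral_congr
    intro a ha
    dsimp only
    rw [uIcc_of_le ht₁.1] at ha
    have hta : t₁ - a ∈ Icc (0:ℝ) δ := ⟨by linarith [ha.2], by linarith [ha.1, ht₁.2]⟩
    rw [← hΦ _ hta, ← hΨ _ hta]
    have hk : kc a = discounted k β a := by simp only [hkcdef]; rw [max_eq_left ha.1]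
    rw [hk]; ring
  have hT1int : ∀ (Φ Ψ : ℝ → ℝ), Continuous Φ → Continuous Ψ →
      IntervalIntegrable (fun a => kc a * (Φ (t₁ - a) * Ψ (t₁ - a))) volume 0 t₁ :=
    fun Φ Ψ hΦ hΨ => (hkcc.mul ((hΦ.comp (continuous_const.sub continuous_id)).mul
      (hΨ.comp (continuous_const.sub continuous_id)))).intervalIntegrable _ _
  have hT1bound : |T1op μ k β f₀ S₀ y₁ z₁ t₁ - T1op μ k β f₀ S₀ y₂ z₂ t₁| ≤ Ck * P * δ := by
    rw [hT1e y₁ z₁ Φ₁ Ψ₁ hΦ₁eq hΨ₁eq, hT1e y₂ z₂ Φ₂ Ψ₂ hΦ₂eq hΨ₂eq,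
      ← intervalIntegral.integral_sub (hT1int Φ₁ Ψ₁ hΦ₁cont hΨ₁cont)
        (hT1int Φ₂ Ψ₂ hΦ₂cont hΨ₂cont)]
    have h := intervalIntegral.norm_integral_le_of_norm_le_const (a := 0) (b := t₁)
      (C := Ck * P)
      (f := fun a => kc a * (Φ₁ (t₁-a) * Ψ₁ (t₁-a)) - kc a * (Φ₂ (t₁-a) * Ψ₂ (t₁-a)))
      (fun x _ => by
        rw [Real.norm_eq_abs, ← mul_sub, abs_mul]
        exact mul_le_mul (hkcb x) (hprod _) (abs_nonneg _) hCk0)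
    rw [Real.norm_eq_abs] at h
    refine h.trans ?_
    have ht : |t₁ - 0| ≤ δ := by rw [sub_zero, abs_of_nonneg ht₁.1]; exact ht₁.2
    exact mul_le_mul_of_nonneg_left ht (mul_nonneg hCk0 hP0)
  -- T2 part
  have hb0 : 0 ≤ bInput D t₂ := (Real.exp_pos _).le
  have hb1 : bInput D t₂ ≤ 1 := by
    unfold bInput
    rw [Real.exp_le_one_iff, neg_nonpos]
    exact intervalIntegral.integral_nonneg ht₂.1 (fun u hu => hD.2.1 u hu.1)
  set I₁ : ℝ → ℝ := fun τ => ∫ a in (0:ℝ)..τ, qc a * (Φ₁ (τ - a) * Ψ₁ (τ - a)) with hI₁def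
  set I₂ : ℝ → ℝ := fun τ => ∫ a in (0:ℝ)..τ, qc a * (Φ₂ (τ - a) * Ψ₂ (τ - a)) with hI₂def
  have hIcont : ∀ (Φ Ψ : ℝ → ℝ), Continuous Φ → Continuous Ψ →
      Continuous (fun τ => ∫ a in (0:ℝ)..τ, qc a * (Φ (τ - a) * Ψ (τ - a))) := by
    intro Φ Ψ hΦ hΨ
    apply intervalIntegral.continuous_parametric_intervalIntegral_of_continuous (μ := volume)
      (f := fun τ a => qc a * (Φ (τ - a) * Ψ (τ - a))) ?_ continuous_id
    exact (hqcc.comp continuous_snd).mul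
      (((hΦ.comp (continuous_fst.sub continuous_snd))).mul
        (hΨ.comp (continuous_fst.sub continuous_snd)))
  have hI₁cont : Continuous I₁ := hIcont Φ₁ Ψ₁ hΦ₁cont hΨ₁cont
  have hI₂cont : Continuous I₂ := hIcont Φ₂ Ψ₂ hΦ₂cont hΨ₂cont
  have hIint : ∀ (Φ Ψ : ℝ → ℝ), Continuous Φ → Continuous Ψ → ∀ τ : ℝ,
      IntervalIntegrable (fun a => qc a * (Φ (τ - a) * Ψ (τ - a))) volume 0 τ :=
    fun Φ Ψ hΦ hΨ τ => (hqcc.mul ((hΦ.comp (continuous_const.sub continuous_id)).mul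
      (hΨ.comp (continuous_const.sub continuous_id)))).intervalIntegrable _ _
  have hI₂b : ∀ τ, 0 ≤ τ → |I₂ τ| ≤ Cq * (M * (R + Cg)) * τ := by
    intro τ hτ
    have h := intervalIntegral.norm_integral_le_of_norm_le_const (a := 0) (b := τ)
      (C := Cq * (M * (R + Cg))) (f := fun a => qc a * (Φ₂ (τ-a) * Ψ₂ (τ-a)))
      (fun x _ => by
        rw [Real.norm_eq_abs, abs_mul]
        refine mul_le_mul (hqcb x) ?_ (abs_nonneg _) hCq0
        rw [abs_mul]
        exact mul_le_mul (hΦ₂M _) (hΨ₂b _) (abs_nonneg _) hM0)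
    rw [Real.norm_eq_abs, sub_zero, abs_of_nonneg hτ] at h
    exact h
  have hIdiff : ∀ τ, 0 ≤ τ → |I₁ τ - I₂ τ| ≤ Cq * P * τ := by
    intro τ hτ
    rw [show I₁ τ - I₂ τ = ∫ a in (0:ℝ)..τ,
        (qc a * (Φ₁ (τ - a) * Ψ₁ (τ - a)) - qc a * (Φ₂ (τ - a) * Ψ₂ (τ - a))) from by
      rw [intervalIntegral.integral_sub (hIint Φ₁ Ψ₁ hΦ₁cont hΨ₁cont τ)
        (hIint Φ₂ Ψ₂ hΦ₂cont hΨ₂cont τ)]]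
    have h := intervalIntegral.norm_integral_le_of_norm_le_const (a := 0) (b := τ)
      (C := Cq * P)
      (f := fun a => qc a * (Φ₁ (τ-a) * Ψ₁ (τ-a)) - qc a * (Φ₂ (τ-a) * Ψ₂ (τ-a)))
      (fun x _ => by
        rw [Real.norm_eq_abs, ← mul_sub, abs_mul]
        exact mul_le_mul (hqcb x) (hprod _) (abs_nonneg _) hCq0)
    rw [Real.norm_eq_abs, sub_zero, abs_of_nonneg hτ] at h
    exact h
  have hT2e : ∀ (y z Φ Ψ I : ℝ → ℝ),
      (∀ s ∈ Icc (0:ℝ) δ, μ (z s + S₀) = Φ s) →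
      (∀ s ∈ Icc (0:ℝ) δ, y s + kernelInt k β f₀ s = Ψ s) →
      (I = fun τ => ∫ a in (0:ℝ)..τ, qc a * (Φ (τ - a) * Ψ (τ - a))) →
      T2op μ k q β f₀ D S_in S₀ y z t₂
        = (S_in - S₀) * (1 - bInput D t₂)
          - bInput D t₂ * (∫ τ in (0:ℝ)..t₂, Φ τ * hcf τ)
          - bInput D t₂ * ∫ τ in (0:ℝ)..t₂, Φ τ * I τ := by
    intro y z Φ Ψ I hΦ hΨ hI
    unfold T2op
    have e1 : (∫ τ in (0:ℝ)..t₂, μ (z τ + S₀) * kernelInt q β f₀ τ)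
        = ∫ τ in (0:ℝ)..t₂, Φ τ * hcf τ := by
      apply intervalIntegral.integral_congr
      intro τ hτ
      dsimp only
      rw [uIcc_of_le ht₂.1] at hτ
      have hτδ : τ ∈ Icc (0:ℝ) δ := ⟨hτ.1, hτ.2.trans ht₂.2⟩
      rw [← hΦ _ hτδ]
      congr 1
      simp only [hhcdef]; rw [hc1id τ hτδ]
    have e2 : (∫ τ in (0:ℝ)..t₂, μ (z τ + S₀) *
          ∫ a in (0:ℝ)..τ, discounted q β a * μ (z (τ - a) + S₀)
            * (y (τ - a) + kernelInt k β f₀ (τ - a)))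
        = ∫ τ in (0:ℝ)..t₂, Φ τ * I τ := by
      apply intervalIntegral.integral_congr
      intro τ hτ
      dsimp only
      rw [uIcc_of_le ht₂.1] at hτ
      have hτδ : τ ∈ Icc (0:ℝ) δ := ⟨hτ.1, hτ.2.trans ht₂.2⟩
      rw [← hΦ _ hτδ]
      simp only [hI]
      congr 1
      apply intervalIntegral.integral_congr
      intro a ha
      dsimp only
      rw [uIcc_of_le hτ.1] at ha
      have haδ : τ - a ∈ Icc (0:ℝ) δ := ⟨by linarith [ha.2], by linarith [ha.1, hτδ.2]⟩
      rw [← hΦ _ haδ, ← hΨ _ haδ]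
      have hq : qc a = discounted q β a := by simp only [hqcdef]; rw [max_eq_left ha.1]
      rw [hq]; ring
    rw [e1, e2]
  have hA₁int : IntervalIntegrable (fun τ => Φ₁ τ * hcf τ) volume 0 t₂ :=
    (hΦ₁cont.mul hhcc).intervalIntegrable _ _
  have hA₂int : IntervalIntegrable (fun τ => Φ₂ τ * hcf τ) volume 0 t₂ :=
    (hΦ₂cont.mul hhcc).intervalIntegrable _ _
  have hB₁int : IntervalIntegrable (fun τ => Φ₁ τ * I₁ τ) volume 0 t₂ :=
    (hΦ₁cont.mul hI₁cont).intervalIntegrable _ _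
  have hB₂int : IntervalIntegrable (fun τ => Φ₂ τ * I₂ τ) volume 0 t₂ :=
    (hΦ₂cont.mul hI₂cont).intervalIntegrable _ _
  set c₁ : ℝ := L * Ez * Ch with hc₁def
  set c₂ : ℝ := M * (Cq * P) + L * Ez * (Cq * (M * (R + Cg))) with hc₂def
  have hc₁0 : 0 ≤ c₁ := mul_nonneg (mul_nonneg hL0 hEz0) hCh0
  have hc₂0 : 0 ≤ c₂ := add_nonneg
    (mul_nonneg hM0 (mul_nonneg hCq0 hP0))
    (mul_nonneg (mul_nonneg hL0 hEz0) (mul_nonneg hCq0 (mul_nonneg hM0 hRCg0)))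
  have hT2bound : |T2op μ k q β f₀ D S_in S₀ y₁ z₁ t₂ - T2op μ k q β f₀ D S_in S₀ y₂ z₂ t₂|
      ≤ c₁ * δ + c₂ * (δ ^ 2 / 2) := by
    rw [hT2e y₁ z₁ Φ₁ Ψ₁ I₁ hΦ₁eq hΨ₁eq hI₁def, hT2e y₂ z₂ Φ₂ Ψ₂ I₂ hΦ₂eq hΨ₂eq hI₂def]
    have e : ((S_in - S₀) * (1 - bInput D t₂)
          - bInput D t₂ * (∫ τ in (0:ℝ)..t₂, Φ₁ τ * hcf τ)
          - bInput D t₂ * ∫ τ in (0:ℝ)..t₂, Φ₁ τ * I₁ τ)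
        - ((S_in - S₀) * (1 - bInput D t₂)
          - bInput D t₂ * (∫ τ in (0:ℝ)..t₂, Φ₂ τ * hcf τ)
          - bInput D t₂ * ∫ τ in (0:ℝ)..t₂, Φ₂ τ * I₂ τ)
        = -(bInput D t₂ * (((∫ τ in (0:ℝ)..t₂, Φ₁ τ * hcf τ)
              - ∫ τ in (0:ℝ)..t₂, Φ₂ τ * hcf τ)
            + ((∫ τ in (0:ℝ)..t₂, Φ₁ τ * I₁ τ) - ∫ τ in (0:ℝ)..t₂, Φ₂ τ * I₂ τ))) := by
      ring
    rw [e, abs_neg, abs_mul, abs_of_nonneg hb0]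
    have hcomb : ((∫ τ in (0:ℝ)..t₂, Φ₁ τ * hcf τ) - ∫ τ in (0:ℝ)..t₂, Φ₂ τ * hcf τ)
          + ((∫ τ in (0:ℝ)..t₂, Φ₁ τ * I₁ τ) - ∫ τ in (0:ℝ)..t₂, Φ₂ τ * I₂ τ)
        = ∫ τ in (0:ℝ)..t₂,
            ((Φ₁ τ - Φ₂ τ) * hcf τ + (Φ₁ τ * I₁ τ - Φ₂ τ * I₂ τ)) := by
      rw [← intervalIntegral.integral_sub hA₁int hA₂int,
        ← intervalIntegral.integral_sub hB₁int hB₂int,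
        ← intervalIntegral.integral_add (hA₁int.sub hA₂int) (hB₁int.sub hB₂int)]
      apply intervalIntegral.integral_congr
      intro τ _
      dsimp only
      ring
    rw [hcomb]
    have hgint : IntervalIntegrable (fun τ => c₁ + c₂ * τ) volume 0 t₂ :=
      (continuous_const.add (continuous_const.mul continuous_id)).intervalIntegrable _ _
    have hae : ∀ᵐ τ ∂(volume.restrict (Set.uIoc (0:ℝ) t₂)),
        ‖(Φ₁ τ - Φ₂ τ) * hcf τ + (Φ₁ τ * I₁ τ - Φ₂ τ * I₂ τ)‖ ≤ c₁ + c₂ * τ := by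
      rw [ae_restrict_iff' measurableSet_uIoc]
      refine Eventually.of_forall fun τ hτ => ?_
      rw [uIoc_of_le ht₂.1] at hτ
      have hτ0 : 0 ≤ τ := hτ.1.le
      have h1 : |(Φ₁ τ - Φ₂ τ) * hcf τ| ≤ c₁ := by
        rw [hc₁def, abs_mul]
        exact mul_le_mul (hΦd τ) (hhcb τ) (abs_nonneg _) (mul_nonneg hL0 hEz0)
      have h2 : |Φ₁ τ * I₁ τ - Φ₂ τ * I₂ τ| ≤ c₂ * τ := by
        have e2 : Φ₁ τ * I₁ τ - Φ₂ τ * I₂ τ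
            = Φ₁ τ * (I₁ τ - I₂ τ) + (Φ₁ τ - Φ₂ τ) * I₂ τ := by ring
        rw [e2, hc₂def]
        refine (abs_add_le _ _).trans ?_
        rw [add_mul]
        refine add_le_add ?_ ?_
        · rw [abs_mul]
          calc |Φ₁ τ| * |I₁ τ - I₂ τ| ≤ M * (Cq * P * τ) :=
                mul_le_mul (hΦ₁M τ) (hIdiff τ hτ0) (abs_nonneg _) hM0
            _ = M * (Cq * P) * τ := by ring
        · rw [abs_mul]
          calc |Φ₁ τ - Φ₂ τ| * |I₂ τ| ≤ (L * Ez) * (Cq * (M * (R + Cg)) * τ) :=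
                mul_le_mul (hΦd τ) (hI₂b τ hτ0) (abs_nonneg _) (mul_nonneg hL0 hEz0)
            _ = L * Ez * (Cq * (M * (R + Cg))) * τ := by ring
      calc ‖(Φ₁ τ - Φ₂ τ) * hcf τ + (Φ₁ τ * I₁ τ - Φ₂ τ * I₂ τ)‖
          ≤ |(Φ₁ τ - Φ₂ τ) * hcf τ| + |Φ₁ τ * I₁ τ - Φ₂ τ * I₂ τ| := abs_add_le _ _
        _ ≤ c₁ + c₂ * τ := add_le_add h1 h2
    have h := intervalIntegral.norm_integral_le_of_norm_le ht₂.1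
      (by rw [← uIoc_of_le ht₂.1]; exact (ae_restrict_iff' measurableSet_uIoc).mp hae) hgint
    rw [Real.norm_eq_abs] at h
    have hgval : (∫ τ in (0:ℝ)..t₂, (c₁ + c₂ * τ)) = c₁ * t₂ + c₂ * (t₂ ^ 2 / 2) := by
      have hg1 : IntervalIntegrable (fun _ : ℝ => c₁) volume 0 t₂ := intervalIntegrable_const
      have hg2 : IntervalIntegrable (fun τ : ℝ => c₂ * τ) volume 0 t₂ :=
        (continuous_const.mul continuous_id).intervalIntegrable _ _
      rw [intervalIntegral.integral_add hg1 hg2, intervalIntegral.integral_const,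
        intervalIntegral.integral_const_mul, integral_id]
      simp only [smul_eq_mul, sub_zero]
      ring
    rw [hgval] at h
    have hval0 : 0 ≤ c₁ * t₂ + c₂ * (t₂ ^ 2 / 2) :=
      add_nonneg (mul_nonneg hc₁0 ht₂.1)
        (mul_nonneg hc₂0 (by positivity))
    have hle : c₁ * t₂ + c₂ * (t₂ ^ 2 / 2) ≤ c₁ * δ + c₂ * (δ ^ 2 / 2) := by
      have ht2sq : t₂ ^ 2 ≤ δ ^ 2 := pow_le_pow_left₀ ht₂.1 ht₂.2 2
      exact add_le_add (mul_le_mul_of_nonneg_left ht₂.2 hc₁0)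
        (mul_le_mul_of_nonneg_left ((div_le_div_iff_of_pos_right two_pos).mpr ht2sq) hc₂0)
    exact (mul_le_of_le_one_left (abs_nonneg _) hb1).trans (h.trans hle)
  refine (add_le_add hT1bound hT2bound).trans ?_
  simp only [hPdef, hc₁def, hc₂def]
  have hnn : 0 ≤ M * M * Cq * Ey * (δ ^ 2 / 2) := by positivity
  have e : M * (Ck + M * Cq * δ) * δ * Ey
        + L * (Ch + (M * Cq * δ + Ck) * (R + Cg)) * δ * Ez
      = (Ck * (M * Ey + L * Ez * (R + Cg)) * δ
          + (L * Ez * Ch * δ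
            + (M * (Cq * (M * Ey + L * Ez * (R + Cg)))
                + L * Ez * (Cq * (M * (R + Cg)))) * (δ ^ 2 / 2)))
        + M * M * Cq * Ey * (δ ^ 2 / 2) := by ring
  linarith [hnn, e.ge]
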